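/- Let K and K̃ be real symmetric positive semidefinite n×n matrices with K - K̃ positive semidefinite and ‖K - K̃‖ ≤ M·λ_{k+1}(K) with 0 ≤ M ≤ M̄, let β > 0, and let ξ > 1. If λ_{k+1}(K) ≤ β·(ξ - 1)/M̄, then with S = (K̃ + βI)^{-1/2}(K + βI)(K̃ + βI)^{-1/2} one has I ≤ S ≤ ξ·I in the Loewner order, i.e. the condition number of S is at most ξ. -/

import Mathlib

/-!
Put `R = (K̃ + βI)^{-1/2}`, a symmetric matrix with `R (K̃ + βI) R = I`. Congruence by `R` preserves
positive semidefiniteness, and `S - I = R (K - K̃) R`, `ξI - S = R (ξ(K̃ + βI) - K - βI) R`.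
The first is PSD because `K ≥ K̃`. For the second,
`ξ(K̃ + βI) - K - βI = (ξ - 1) K̃ + ((ξ - 1) β I - (K - K̃))`, and the last summand is PSD because
`‖K - K̃‖ ≤ M λ_{k+1}(K) ≤ (ξ - 1) β`.
-/

open scoped Matrix.Norms.L2Operator
open Matrix

/-- The square root of a positive semidefinite matrix, with its definition from the older
Mathlib (`Matrix.PosSemidef.sqrt`, since removed): `U * diagonal (√λ) * U⋆`. -/
noncomputable def Matrix.PosSemidef.sqrt {n 𝕜 : Type*} [Fintype n] [DecidableEq n] [RCLike 𝕜]
    [PartialOrder 𝕜]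
    {A : Matrix n n 𝕜} (hA : A.PosSemidef) : Matrix n n 𝕜 :=
  hA.1.eigenvectorUnitary.1 * diagonal ((↑) ∘ Real.sqrt ∘ hA.1.eigenvalues) *
    (star hA.1.eigenvectorUnitary : Matrix n n 𝕜)

open scoped RealInnerProductSpace

namespace Matrix

variable {n : Type*} [Fintype n] [DecidableEq n]

lemma PosSemidef.isHermitian_sqrt {𝕜 : Type*} [RCLike 𝕜] [PartialOrder 𝕜] {A : Matrix n n 𝕜}
    (hA : A.PosSemidef) : hA.sqrt.IsHermitian := by
  simp [IsHermitian, PosSemidef.sqrt, conjTranspose_mul, Matrix.mul_assoc, star_eq_conjTranspose,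
    Pi.star_def, Function.comp_def]

lemma PosSemidef.sqrt_mul_self {A : Matrix n n ℝ} (hA : A.PosSemidef) :
    hA.sqrt * hA.sqrt = A := by
  have hU : (star hA.1.eigenvectorUnitary : Matrix n n ℝ) * hA.1.eigenvectorUnitary = 1 :=
    Unitary.star_mul_self_of_mem hA.1.eigenvectorUnitary.2
  conv_rhs => rw [hA.1.spectral_theorem, Unitary.conjStarAlgAut_apply]
  simp only [PosSemidef.sqrt]
  rw [show ∀ a b c : Matrix n n ℝ, a * b * c * (a * b * c) = a * (b * (c * a) * b) * c
    from fun a b c => by simp only [Matrix.mul_assoc], hU, Matrix.mul_one, diagonal_mul_diagonal]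
  congr 3
  funext i
  simp [Real.mul_self_sqrt (hA.eigenvalues_nonneg i)]

lemma PosSemidef.inv_sqrt_mul_mul_inv_sqrt {A : Matrix n n ℝ} (hA : A.PosSemidef)
    (hA_unit : IsUnit A) : hA.sqrt⁻¹ * A * hA.sqrt⁻¹ = 1 := by
  have hsqrt : IsUnit hA.sqrt :=
    isUnit_of_mul_isUnit_left (hA.sqrt_mul_self.symm ▸ hA_unit)
  have hdet := (isUnit_iff_isUnit_det _).mp hsqrt
  calc hA.sqrt⁻¹ * A * hA.sqrt⁻¹ = hA.sqrt⁻¹ * hA.sqrt * (hA.sqrt * hA.sqrt⁻¹) := by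
        rw [Matrix.mul_assoc _ hA.sqrt, ← Matrix.mul_assoc hA.sqrt, hA.sqrt_mul_self,
          Matrix.mul_assoc]
    _ = 1 := by rw [nonsing_inv_mul _ hdet, mul_nonsing_inv _ hdet, Matrix.one_mul]

lemma IsHermitian.posSemidef_smul_one_sub {A : Matrix n n ℝ} (hA : A.IsHermitian) {c : ℝ}
    (hc : ‖A‖ ≤ c) : (c • 1 - A).PosSemidef := by
  refine PosSemidef.of_dotProduct_mulVec_nonneg ?_ fun x => ?_
  · simp only [IsHermitian, conjTranspose_sub, conjTranspose_smul, conjTranspose_one, star_trivial,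
      hA.eq]
  set y : EuclideanSpace ℝ n := WithLp.toLp 2 x
  have hquad : x ⬝ᵥ A *ᵥ x ≤ ‖A‖ * ‖y‖ ^ 2 := calc
    x ⬝ᵥ A *ᵥ x = ⟪y, toEuclideanCLM (𝕜 := ℝ) A y⟫ := (inner_toEuclideanCLM A y y).symm
    _ ≤ ‖y‖ * (‖A‖ * ‖y‖) := (real_inner_le_norm _ _).trans <|
      mul_le_mul_of_nonneg_left (A.l2_opNorm_mulVec y) (norm_nonneg y)
    _ = ‖A‖ * ‖y‖ ^ 2 := by ring
  have hnormsq : x ⬝ᵥ x = ‖y‖ ^ 2 := by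
    rw [← real_inner_self_eq_norm_sq, EuclideanSpace.inner_toLp_toLp, star_trivial]
  rw [sub_mulVec, smul_mulVec, one_mulVec, dotProduct_sub, dotProduct_smul, star_trivial,
    hnormsq, smul_eq_mul]
  nlinarith [sq_nonneg ‖y‖]

section Congruence

variable {R : Type*} [CommRing R] [PartialOrder R] [StarRing R] {C A B : Matrix n n R}

lemma PosSemidef.conj_sub_one (hC : Cᴴ = C) (hCAC : C * A * C = 1) (h : (B - A).PosSemidef) :
    (C * B * C - 1).PosSemidef := by
  have := h.mul_mul_conjTranspose_same C
  rwa [hC, Matrix.mul_sub, Matrix.sub_mul, hCAC] at this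

lemma PosSemidef.smul_one_sub_conj (hC : Cᴴ = C) (hCAC : C * A * C = 1) {c : R}
    (h : (c • A - B).PosSemidef) : (c • 1 - C * B * C).PosSemidef := by
  have := h.mul_mul_conjTranspose_same C
  rwa [hC, Matrix.mul_sub, Matrix.sub_mul, Matrix.mul_smul, Matrix.smul_mul, hCAC] at this

end Congruence

end Matrix

lemma mul_le_of_le_div_of_le_of_nonneg {M Mbar μ t : ℝ} (hM0 : 0 ≤ M) (hMM : M ≤ Mbar)
    (ht : 0 ≤ t) (hμ : μ ≤ t / Mbar) : M * μ ≤ t := by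
  rcases le_or_gt μ 0 with hμ0 | hμ0
  · exact (mul_nonpos_of_nonneg_of_nonpos hM0 hμ0).trans ht
  rcases (hM0.trans hMM).eq_or_lt with hMbar | hMbar
  -- `t / 0 = 0` makes `hμ` useless here, but `Mbar = 0` forces `M = 0`.
  · rw [le_antisymm (hMbar ▸ hMM) hM0, zero_mul]
    exact ht
  · calc M * μ ≤ Mbar * μ := by gcongr
      _ ≤ t := by rwa [le_div_iff₀ hMbar, mul_comm] at hμ

theorem stmt13_general {n k : ℕ} (hk : k < n)
    (K Kt : Matrix (Fin n) (Fin n) ℝ)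
    (hKt : Kt.PosSemidef)
    (hdiff : (K - Kt).PosSemidef)
    (M Mbar : ℝ) (hM0 : 0 ≤ M) (hMM : M ≤ Mbar)
    (μ : Fin n → ℝ)
    (hnorm : ‖K - Kt‖ ≤ M * μ ⟨k, hk⟩)
    (β ξ : ℝ) (hβ : 0 < β) (hξ : 1 < ξ)
    (hlam : μ ⟨k, hk⟩ ≤ β * (ξ - 1) / Mbar)
    (h₁ : (Kt + β • (1 : Matrix (Fin n) (Fin n) ℝ)).PosSemidef)
    (S : Matrix (Fin n) (Fin n) ℝ)
    (hS : S = h₁.sqrt⁻¹ * (K + β • (1 : Matrix (Fin n) (Fin n) ℝ)) * h₁.sqrt⁻¹) :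
    (S - 1).PosSemidef ∧ (ξ • (1 : Matrix (Fin n) (Fin n) ℝ) - S).PosSemidef := by
  subst hS
  have hunit : IsUnit (Kt + β • 1) := (PosDef.posSemidef_add hKt (PosDef.one.smul hβ)).isUnit
  have hconj := h₁.inv_sqrt_mul_mul_inv_sqrt hunit
  have hsymm : (h₁.sqrt⁻¹)ᴴ = h₁.sqrt⁻¹ := by
    rw [conjTranspose_nonsing_inv, h₁.isHermitian_sqrt.eq]
  have hgap : ‖K - Kt‖ ≤ (ξ - 1) * β := hnorm.trans <|
    mul_le_of_le_div_of_le_of_nonneg hM0 hMM (by nlinarith) (by rwa [mul_comm])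
  have hlower : (K + β • 1 - (Kt + β • 1)).PosSemidef := by rwa [add_sub_add_right_eq_sub]
  have hupper : (ξ • (Kt + β • 1) - (K + β • 1)).PosSemidef := by
    have hsplit : ξ • (Kt + β • 1) - (K + β • 1) =
        (ξ - 1) • Kt + (((ξ - 1) * β) • (1 : Matrix (Fin n) (Fin n) ℝ) - (K - Kt)) := by
      module
    rw [hsplit]
    exact (hKt.smul (sub_nonneg.mpr hξ.le)).add (hdiff.isHermitian.posSemidef_smul_one_sub hgap)
  exact ⟨hlower.conj_sub_one hsymm hconj, hupper.smul_one_sub_conj hsymm hconj⟩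

/-- If `K, K̃` are real symmetric PSD with `K - K̃` PSD,
`‖K - K̃‖ ≤ M λ_{k+1}(K)` with `0 ≤ M ≤ M̄`, `β > 0`, `ξ > 1`, and
`λ_{k+1}(K) ≤ β (ξ - 1) / M̄`, then with `S = (K̃ + βI)^{-1/2} (K + βI) (K̃ + βI)^{-1/2}` one has
`I ≤ S ≤ ξ I` in the Loewner order, i.e. the condition number of `S` is at most `ξ`. -/
theorem stmt13 {n k : ℕ} (hk : k < n)
    (K Kt : Matrix (Fin n) (Fin n) ℝ)
    (hK : K.PosSemidef) (hKt : Kt.PosSemidef)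
    (hdiff : (K - Kt).PosSemidef)
    (M Mbar : ℝ) (hM0 : 0 ≤ M) (hMM : M ≤ Mbar)
    (μ : Fin n → ℝ) (hμanti : Antitone μ)
    (hμ : ∃ e : Equiv.Perm (Fin n), ∀ i, μ i = hK.isHermitian.eigenvalues (e i))
    (hnorm : ‖K - Kt‖ ≤ M * μ ⟨k, hk⟩)
    (β ξ : ℝ) (hβ : 0 < β) (hξ : 1 < ξ)
    (hlam : μ ⟨k, hk⟩ ≤ β * (ξ - 1) / Mbar)
    (h₁ : (Kt + β • (1 : Matrix (Fin n) (Fin n) ℝ)).PosSemidef)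
    (S : Matrix (Fin n) (Fin n) ℝ)
    (hS : S = h₁.sqrt⁻¹ * (K + β • (1 : Matrix (Fin n) (Fin n) ℝ)) * h₁.sqrt⁻¹) :
    (S - 1).PosSemidef ∧ (ξ • (1 : Matrix (Fin n) (Fin n) ℝ) - S).PosSemidef :=
  stmt13_general hk K Kt hKt hdiff M Mbar hM0 hMM μ hnorm β ξ hβ hξ hlam h₁ S hS
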